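/- Degenerate-weight interpolation inequality: There exists C > 0 such that for every C³ function θ on [-1,1], ‖h_s θ''‖_{L^∞(-1,1)} ≤ C ( ‖h_s θ'''‖_{L²(-1,1)} + ‖θ''‖_{L²(-1,1)} ). -/

import Mathlib

noncomputable def hs : ℝ → ℝ := fun x =>
  (Real.exp 1 ^ 2 + 1) / (Real.exp 1 ^ 2 - 1) -
    (Real.exp (x + 1) + Real.exp (1 - x)) / (Real.exp 1 ^ 2 - 1)

/-!
On `[-1, 1]` the weight satisfies `0 ≤ hs ≤ 1` and `|hs'| ≤ 1`. The one-dimensional Sobolev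
bound `F x ≤ mean F + ∫ |F'|` (compare `F x` with the minimum of `F`) applied to
`F = (hs θ'')²`, whose derivative `2 hs θ'' (hs' θ'' + hs θ''')` is dominated by
`3 θ''² + (hs θ''')²`, gives `(hs θ'')² ≤ 4 (‖hs θ'''‖² + ‖θ''‖²)`.
-/

open Set Real MeasureTheory intervalIntegral

noncomputable def hs' (x : ℝ) : ℝ :=
  (exp (1 - x) - exp (x + 1)) / (exp 1 ^ 2 - 1)

theorem hs_hasDerivAt (x : ℝ) : HasDerivAt hs (hs' x) x := by
  have hp : HasDerivAt (fun x => exp (x + 1)) (exp (x + 1)) x := by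
    simpa using ((hasDerivAt_id x).add_const 1).exp
  have hq : HasDerivAt (fun x => exp (1 - x)) (-exp (1 - x)) x := by
    simpa using ((hasDerivAt_id x).const_sub 1).exp
  exact (((hp.add hq).div_const (exp 1 ^ 2 - 1)).const_sub
    ((exp 1 ^ 2 + 1) / (exp 1 ^ 2 - 1))).congr_deriv (by unfold hs'; ring)

theorem continuous_hs : Continuous hs :=
  continuous_iff_continuousAt.2 fun x => (hs_hasDerivAt x).continuousAt

theorem continuous_hs' : Continuous hs' := by
  unfold hs'; fun_prop

theorem one_lt_exp_one_sq : 1 < exp 1 ^ 2 :=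
  one_lt_pow₀ (one_lt_exp_iff.2 one_pos) two_ne_zero

theorem one_le_exp_le_exp_one_sq {s : ℝ} (hs : s ∈ Icc (0 : ℝ) 2) :
    1 ≤ exp s ∧ exp s ≤ exp 1 ^ 2 := by
  rw [exp_one_pow, Nat.cast_ofNat]
  exact ⟨one_le_exp hs.1, exp_le_exp.2 hs.2⟩

theorem abs_hs_le_one {t : ℝ} (ht : t ∈ Icc (-1 : ℝ) 1) : |hs t| ≤ 1 := by
  have hp : 1 ≤ exp (t + 1) := one_le_exp (by linarith [ht.1])
  have hq : 1 ≤ exp (1 - t) := one_le_exp (by linarith [ht.2])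
  have hpq : exp (t + 1) * exp (1 - t) = exp 1 ^ 2 := by
    rw [← exp_add, exp_one_pow]; ring_nf
  have hE := sub_pos.2 one_lt_exp_one_sq
  have hs_eq : hs t = (exp 1 ^ 2 + 1 - (exp (t + 1) + exp (1 - t))) / (exp 1 ^ 2 - 1) := by
    unfold hs; ring
  -- `hs t ≥ 0` is `(exp (t + 1) - 1) * (exp (1 - t) - 1) ≥ 0` in disguise.
  rw [hs_eq, abs_le, le_div_iff₀ hE, div_le_iff₀ hE]
  constructor <;> nlinarith [mul_nonneg (sub_nonneg.2 hp) (sub_nonneg.2 hq)]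

theorem abs_hs'_le_one {t : ℝ} (ht : t ∈ Icc (-1 : ℝ) 1) : |hs' t| ≤ 1 := by
  obtain ⟨hp1, hp2⟩ :=
    one_le_exp_le_exp_one_sq (s := t + 1) ⟨by linarith [ht.1], by linarith [ht.2]⟩
  obtain ⟨hq1, hq2⟩ :=
    one_le_exp_le_exp_one_sq (s := 1 - t) ⟨by linarith [ht.2], by linarith [ht.1]⟩
  have hE := sub_pos.2 one_lt_exp_one_sq
  unfold hs'
  rw [abs_le, le_div_iff₀ hE, div_le_iff₀ hE]
  constructor <;> linarith

theorem hs_neg_one : hs (-1) = 0 := by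
  unfold hs; rw [exp_one_pow]; norm_num [add_comm]

theorem hs_one : hs 1 = 0 := by
  unfold hs; rw [exp_one_pow]; norm_num

theorem sub_le_integral_abs_deriv {F F' : ℝ → ℝ} {a b x y : ℝ}
    (hF : ContinuousOn F (Icc a b)) (hF' : ∀ t ∈ Ioo a b, HasDerivAt F (F' t) t)
    (hint : IntervalIntegrable F' volume a b) (hx : x ∈ Icc a b) (hy : y ∈ Icc a b) :
    F x - F y ≤ ∫ t in a..b, |F' t| := by
  have hsub : uIcc y x ⊆ Icc a b := uIcc_subset_Icc hy hx
  have hsub' : uIcc y x ⊆ uIcc a b := by rwa [uIcc_of_le (hx.1.trans hx.2)]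
  have hFTC : ∫ t in y..x, F' t = F x - F y :=
    integral_eq_sub_of_hasDeriv_right (hF.mono hsub) (fun t ht =>
      (hF' t ⟨(le_min hy.1 hx.1).trans_lt ht.1,
        ht.2.trans_le (max_le hy.2 hx.2)⟩).hasDerivWithinAt)
      (hint.mono_set hsub')
  calc F x - F y ≤ |∫ t in y..x, F' t| := hFTC ▸ le_abs_self _
    _ ≤ abs (∫ t in y..x, |F' t|) := by
          simpa only [Real.norm_eq_abs] using
            norm_integral_le_abs_integral_norm (f := F') (a := y) (b := x)
    _ ≤ abs (∫ t in a..b, |F' t|) := abs_integral_mono_interval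
          (uIoc_subset_uIoc_of_uIcc_subset_uIcc hsub')
          (Filter.Eventually.of_forall fun t => abs_nonneg _) hint.abs
    _ = ∫ t in a..b, |F' t| :=
          abs_of_nonneg (integral_nonneg (hx.1.trans hx.2) fun t _ => abs_nonneg _)

theorem le_inv_mul_integral_add_integral_abs_deriv {F F' : ℝ → ℝ} {a b x : ℝ} (hab : a < b)
    (hF : ContinuousOn F (Icc a b)) (hF' : ∀ t ∈ Ioo a b, HasDerivAt F (F' t) t)
    (hint : IntervalIntegrable F' volume a b) (hx : x ∈ Icc a b) :
    F x ≤ (b - a)⁻¹ * (∫ t in a..b, F t) + ∫ t in a..b, |F' t| := by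
  obtain ⟨y, hy, hmin⟩ := isCompact_Icc.exists_isMinOn (nonempty_Icc.2 hab.le) hF
  have hFy : F y ≤ (b - a)⁻¹ * ∫ t in a..b, F t := by
    rw [le_inv_mul_iff₀ (sub_pos.2 hab)]
    calc (b - a) * F y = ∫ _ in a..b, F y := by simp
      _ ≤ ∫ t in a..b, F t :=
        integral_mono_on hab.le intervalIntegrable_const (hF.intervalIntegrable_of_Icc hab.le)
          fun t ht => hmin ht
  linarith [sub_le_integral_abs_deriv hF hF' hint hx hy]

theorem abs_two_mul_mul_add_le {w w' u v : ℝ} (hw : |w| ≤ 1) (hw' : |w'| ≤ 1) :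
    |2 * (w * u) * (w' * u + w * v)| ≤ 3 * u ^ 2 + (w * v) ^ 2 := by
  have hww' : |w * w'| ≤ 1 := by
    rw [abs_mul]; exact mul_le_one₀ hw (abs_nonneg _) hw'
  have hw2 : w ^ 2 ≤ 1 := by nlinarith [sq_abs w, abs_nonneg w]
  obtain ⟨h1, h2⟩ := abs_le.1 hww'
  rw [abs_le]
  constructor <;> nlinarith [mul_nonneg (sq_nonneg w) (sq_nonneg (u - v)),
    mul_nonneg (sq_nonneg w) (sq_nonneg (u + v)), mul_le_mul_of_nonneg_right hw2 (sq_nonneg u),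
    mul_le_mul_of_nonneg_right h2 (sq_nonneg u), mul_le_mul_of_nonneg_right h1 (sq_nonneg u)]

theorem sq_mul_le_of_abs_le_one {w w' u u' : ℝ → ℝ} {a b x : ℝ} (hab : a < b)
    (hw : ContinuousOn w (Icc a b)) (hw' : ∀ t ∈ Ioo a b, HasDerivAt w (w' t) t)
    (hw'c : ContinuousOn w' (Icc a b))
    (hw1 : ∀ t ∈ Icc a b, |w t| ≤ 1) (hw'1 : ∀ t ∈ Icc a b, |w' t| ≤ 1)
    (hu : ContinuousOn u (Icc a b)) (hu' : ∀ t ∈ Ioo a b, HasDerivAt u (u' t) t)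
    (hu'c : ContinuousOn u' (Icc a b)) (hx : x ∈ Icc a b) :
    (w x * u x) ^ 2 ≤
      ((b - a)⁻¹ + 3) * (∫ t in a..b, u t ^ 2) + ∫ t in a..b, (w t * u' t) ^ 2 := by
  have hint : ∀ {f : ℝ → ℝ}, ContinuousOn f (Icc a b) → IntervalIntegrable f volume a b :=
    fun hf => hf.intervalIntegrable_of_Icc hab.le
  have hF' : ContinuousOn (fun t => 2 * (w t * u t) * (w' t * u t + w t * u' t)) (Icc a b) := by
    fun_prop
  have hmain := le_inv_mul_integral_add_integral_abs_deriv (F := fun t => (w t * u t) ^ 2) hab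
    ((hw.mul hu).pow 2) (fun t ht => (((hw' t ht).mul (hu' t ht)).pow 2).congr_deriv
      (by simp only [Pi.mul_apply]; ring)) (hint hF') hx
  have hwu : ∫ t in a..b, (w t * u t) ^ 2 ≤ ∫ t in a..b, u t ^ 2 :=
    integral_mono_on hab.le (hint (by fun_prop)) (hint (by fun_prop)) fun t ht => by
      rw [mul_pow]
      exact mul_le_of_le_one_left (sq_nonneg _)
        (by nlinarith [sq_abs (w t), abs_nonneg (w t), hw1 t ht])
  have hF'le : ∫ t in a..b, |2 * (w t * u t) * (w' t * u t + w t * u' t)| ≤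
      3 * (∫ t in a..b, u t ^ 2) + ∫ t in a..b, (w t * u' t) ^ 2 := by
    rw [← intervalIntegral.integral_const_mul,
      ← integral_add (hint (by fun_prop)) (hint (by fun_prop))]
    exact integral_mono_on hab.le (hint hF'.abs) (hint (by fun_prop))
      fun t ht => abs_two_mul_mul_add_le (hw1 t ht) (hw'1 t ht)
  have hinv :
      (b - a)⁻¹ * ∫ t in a..b, (w t * u t) ^ 2 ≤ (b - a)⁻¹ * ∫ t in a..b, u t ^ 2 :=
    mul_le_mul_of_nonneg_left hwu (inv_nonneg.2 (sub_pos.2 hab).le)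
  linarith

theorem derivWithin_Icc_eqOn_deriv {f g : ℝ → ℝ} {a b : ℝ} (h : EqOn f g (Ioo a b)) :
    EqOn (derivWithin f (Icc a b)) (deriv g) (Ioo a b) := fun z hz => by
  rw [derivWithin_of_mem_nhds (Icc_mem_nhds hz.1 hz.2)]
  exact Filter.EventuallyEq.deriv_eq (Filter.eventuallyEq_of_mem (isOpen_Ioo.mem_nhds hz) h)

theorem hasDerivAt_derivWithin_Icc {f : ℝ → ℝ} {a b t : ℝ}
    (hf : DifferentiableOn ℝ f (Icc a b)) (ht : t ∈ Ioo a b) :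
    HasDerivAt f (derivWithin f (Icc a b) t) t :=
  (hf t (Ioo_subset_Icc_self ht)).hasDerivWithinAt.hasDerivAt (Icc_mem_nhds ht.1 ht.2)

-- `deriv` is junk at the endpoints, so the second and third derivatives are replaced by
-- one-sided derivatives on `Icc a b`, which agree with them inside.
theorem exists_continuousOn_eqOn_deriv_deriv {θ : ℝ → ℝ} {a b : ℝ} (hab : a < b)
    (hθ : ContDiffOn ℝ 3 θ (Icc a b)) :
    ∃ u u' : ℝ → ℝ, ContinuousOn u (Icc a b) ∧ ContinuousOn u' (Icc a b) ∧
      (∀ t ∈ Ioo a b, HasDerivAt u (u' t) t) ∧ EqOn u (deriv (deriv θ)) (Ioo a b) ∧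
      EqOn u' (deriv (deriv (deriv θ))) (Ioo a b) := by
  have hI : UniqueDiffOn ℝ (Icc a b) := uniqueDiffOn_Icc hab
  have hu : ContDiffOn ℝ 1 (derivWithin (derivWithin θ (Icc a b)) (Icc a b)) (Icc a b) :=
    (hθ.derivWithin (m := 2) hI (by norm_num)).derivWithin hI (by norm_num)
  have hu_eq := derivWithin_Icc_eqOn_deriv (derivWithin_Icc_eqOn_deriv (eqOn_refl θ (Ioo a b)))
  exact ⟨_, _, hu.continuousOn, hu.continuousOn_derivWithin hI le_rfl,
    fun _ => hasDerivAt_derivWithin_Icc (hu.differentiableOn one_ne_zero), hu_eq,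
    derivWithin_Icc_eqOn_deriv hu_eq⟩

theorem hs_mul_eq_of_eqOn {f g : ℝ → ℝ} (h : EqOn f g (Ioo (-1) 1)) {x : ℝ}
    (hx : x ∈ Icc (-1 : ℝ) 1) : hs x * f x = hs x * g x := by
  rcases eq_endpoints_or_mem_Ioo_of_mem_Icc hx with rfl | rfl | hx
  · rw [hs_neg_one, zero_mul, zero_mul]
  · rw [hs_one, zero_mul, zero_mul]
  · rw [h hx]

theorem abs_le_two_mul_sqrt_add_sqrt {v A B : ℝ} (hA : 0 ≤ A) (hB : 0 ≤ B)
    (h : v ^ 2 ≤ 4 * (A + B)) : |v| ≤ 2 * (√A + √B) :=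
  (abs_le_sqrt h).trans <| sqrt_le_iff.2 ⟨by positivity, by
    nlinarith [sq_sqrt hA, sq_sqrt hB, sqrt_nonneg A, sqrt_nonneg B]⟩

theorem stmt_10 :
    ∃ C > (0 : ℝ), ∀ θ : ℝ → ℝ, ContDiffOn ℝ 3 θ (Set.Icc (-1 : ℝ) 1) →
      ∀ x ∈ Set.Icc (-1 : ℝ) 1,
        |hs x * deriv (deriv θ) x| ≤
          C * (Real.sqrt (∫ ξ in (-1 : ℝ)..1, (hs ξ * deriv (deriv (deriv θ)) ξ) ^ 2) +
               Real.sqrt (∫ ξ in (-1 : ℝ)..1, (deriv (deriv θ) ξ) ^ 2)) := by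
  refine ⟨2, two_pos, fun θ hθ x hx => ?_⟩
  obtain ⟨u, u', hu, hu'c, hu', hu_eq, hu'_eq⟩ :=
    exists_continuousOn_eqOn_deriv_deriv (by norm_num) hθ
  have key := sq_mul_le_of_abs_le_one (by norm_num) continuous_hs.continuousOn
    (fun t _ => hs_hasDerivAt t) continuous_hs'.continuousOn (fun _ => abs_hs_le_one)
    (fun _ => abs_hs'_le_one) hu hu' hu'c hx
  have hA : ∫ t in (-1 : ℝ)..1, (hs t * u' t) ^ 2 =
      ∫ t in (-1 : ℝ)..1, (hs t * deriv (deriv (deriv θ)) t) ^ 2 :=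
    integral_congr_Ioo_of_le (by norm_num) fun t ht => by simp only [hu'_eq ht]
  have hB : ∫ t in (-1 : ℝ)..1, u t ^ 2 = ∫ t in (-1 : ℝ)..1, deriv (deriv θ) t ^ 2 :=
    integral_congr_Ioo_of_le (by norm_num) fun t ht => by simp only [hu_eq ht]
  rw [hs_mul_eq_of_eqOn hu_eq hx, hA, hB] at key
  have hA0 : 0 ≤ ∫ t in (-1 : ℝ)..1, (hs t * deriv (deriv (deriv θ)) t) ^ 2 :=
    integral_nonneg (by norm_num) fun _ _ => sq_nonneg _
  have hB0 : 0 ≤ ∫ t in (-1 : ℝ)..1, deriv (deriv θ) t ^ 2 :=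
    integral_nonneg (by norm_num) fun _ _ => sq_nonneg _
  rw [show ((1 : ℝ) - -1)⁻¹ + 3 = 7 / 2 by norm_num] at key
  exact abs_le_two_mul_sqrt_add_sqrt hA0 hB0 (by linarith)
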